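/- arXiv:0811.3518 — 2 statements merged into one kernel-verified Lean document; each statement's English description precedes it below -/
import Mathlib

section
/- Let n ∈ ℕ, let X₁,…,X_n and F be Banach spaces over 𝕂, let 0 < p < ∞, and let T : X₁ × ⋯ × X_n → F be a continuous n-linear mapping. Then T is τ(p)-summing, i.e. there is a constant C₁ > 0 such that ∑_{j=1}^m |⟨b_j, T(x_j¹,…,x_jⁿ)⟩|^p ≤ C₁ · sup_{(φ₁,…,φ_n,φ'') ∈ K} ∑_{j=1}^m (|φ₁(x_j¹)| ⋯ |φ_n(x_jⁿ)| · |φ''(b_j)|)^p for all m ∈ ℕ, all tuples (x_j¹,…,x_jⁿ) ∈ X₁ × ⋯ × X_n and all b₁,…,b_m ∈ F', if and only if there exist a constant C > 0 and a regular Borel probability measure μ on K such that |⟨b, T(x₁,…,x_n)⟩| ≤ C · (∫_K (|φ₁(x₁)| ⋯ |φ_n(x_n)| · |φ''(b)|)^p dμ)^{1/p} for all (x₁,…,x_n) ∈ X₁ × ⋯ × X_n and all b ∈ F'. -/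
open MeasureTheory TopologicalSpace Set
open scoped NNReal ENNReal

set_option maxHeartbeats 1000000
set_option synthInstance.maxHeartbeats 400000

section helpers

/-- clamp sum identity -/
lemma clamp_sum (t : ℝ) (ht : 0 ≤ t) : ∀ L : ℕ,
    ∑ i ∈ Finset.range L, min (max (t - i) 0) 1 = min t L := by
  intro L
  induction L with
  | zero => simp [min_eq_right ht]
  | succ L ih =>
      rw [Finset.sum_range_succ, ih]
      rcases le_total t L with h | h
      · have h1 : max (t - L) 0 = 0 := max_eq_right (by linarith)
        have : min t (L:ℝ) = t := min_eq_left h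
        push_cast
        rw [h1, this]
        have : min (0:ℝ) 1 = 0 := min_eq_left (by norm_num)
        rw [this, add_zero, min_eq_left (by push_cast; linarith)]
      · have h1 : max (t - L) 0 = t - L := max_eq_left (by linarith)
        rw [min_eq_right h, h1]
        push_cast
        rcases le_total (t - L) 1 with h2 | h2
        · rw [min_eq_left h2, min_eq_left (by push_cast; linarith)]; ring
        · rw [min_eq_right h2, min_eq_right (by push_cast; linarith)]

lemma ite_sum_le (t : ℝ) (ht : 0 ≤ t) : ∀ m : ℕ,
    (∑ i ∈ Finset.range m, if ((i : ℝ) + 1) ≤ t then (1:ℝ) else 0) ≤ t := by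
  intro m
  induction m with
  | zero => simpa using ht
  | succ m ih =>
      rw [Finset.sum_range_succ]
      by_cases h : ((m : ℝ) + 1) ≤ t
      · have : ∀ i ∈ Finset.range (m+1), (if ((i : ℝ) + 1) ≤ t then (1:ℝ) else 0) = 1 := by
          intro i hi
          rw [if_pos]
          have : (i:ℝ) ≤ m := by exact_mod_cast Nat.lt_succ_iff.mp (Finset.mem_range.mp hi)
          linarith
        calc (∑ i ∈ Finset.range m, if ((i : ℝ) + 1) ≤ t then (1:ℝ) else 0)
              + (if ((m : ℝ) + 1) ≤ t then (1:ℝ) else 0)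
            = ∑ i ∈ Finset.range (m+1), if ((i : ℝ) + 1) ≤ t then (1:ℝ) else 0 := by
              rw [Finset.sum_range_succ]
          _ = ∑ i ∈ Finset.range (m+1), (1:ℝ) := Finset.sum_congr rfl this
          _ = (m:ℝ) + 1 := by simp
          _ ≤ t := h
      · rw [if_neg h, add_zero]; exact ih

end helpers

section RMK

variable {G : Type*} [TopologicalSpace G] [CompactSpace G] [T2Space G] [Nonempty G]
  [MeasurableSpace G] [BorelSpace G]

/-- Mini Riesz–Markov: a positive normalized linear functional on `C(G,ℝ)` is dominated by
integration against some regular Borel probability measure. -/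
theorem exists_regular_prob_measure_of_positive_functional
    (Λ : C(G, ℝ) →ₗ[ℝ] ℝ) (hpos : ∀ f : C(G, ℝ), (∀ x, 0 ≤ f x) → 0 ≤ Λ f)
    (hone : Λ (1 : C(G, ℝ)) = 1) :
    ∃ μ : Measure G, μ.Regular ∧ IsProbabilityMeasure μ ∧
      ∀ f : C(G, ℝ), (∀ x, 0 ≤ f x) → Λ f ≤ ∫ x, f x ∂μ := by
  classical
  -- the Riesz content (real-valued)
  set rc : Set G → ℝ := fun C =>
    sInf (Λ '' {h : C(G, ℝ) | (∀ x, 0 ≤ h x) ∧ ∀ x ∈ C, 1 ≤ h x}) with hrc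
  have hΛmono : ∀ f g : C(G, ℝ), (∀ x, f x ≤ g x) → Λ f ≤ Λ g := by
    intro f g h
    have := hpos (g - f) (fun x => by simpa using sub_nonneg.mpr (h x))
    have h2 : Λ (g - f) = Λ g - Λ f := by rw [map_sub]
    linarith [h2 ▸ this]
  have hne : ∀ C : Set G,
      (Λ '' {h : C(G, ℝ) | (∀ x, 0 ≤ h x) ∧ ∀ x ∈ C, 1 ≤ h x}).Nonempty := by
    intro C
    exact ⟨Λ 1, ⟨1, ⟨fun x => by norm_num, fun x _ => by norm_num⟩, rfl⟩⟩
  have hbdd : ∀ C : Set G,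
      BddBelow (Λ '' {h : C(G, ℝ) | (∀ x, 0 ≤ h x) ∧ ∀ x ∈ C, 1 ≤ h x}) := by
    intro C
    exact ⟨0, by rintro r ⟨h, ⟨h0, _⟩, rfl⟩; exact hpos h h0⟩
  have rc_nonneg : ∀ C, 0 ≤ rc C := by
    intro C
    exact le_csInf (hne C) (by rintro r ⟨h, ⟨h0, _⟩, rfl⟩; exact hpos h h0)
  have rc_le : ∀ (C : Set G) (h : C(G, ℝ)), (∀ x, 0 ≤ h x) → (∀ x ∈ C, 1 ≤ h x) →
      rc C ≤ Λ h := by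
    intro C h h0 h1
    exact csInf_le (hbdd C) ⟨h, ⟨h0, h1⟩, rfl⟩
  have rc_mono : ∀ C₁ C₂ : Set G, C₁ ⊆ C₂ → rc C₁ ≤ rc C₂ := by
    intro C₁ C₂ hsub
    refine le_csInf (hne C₂) ?_
    rintro r ⟨h, ⟨h0, h1⟩, rfl⟩
    exact rc_le C₁ h h0 fun x hx => h1 x (hsub hx)
  have rc_le_one : ∀ C, rc C ≤ 1 := by
    intro C
    have := rc_le C 1 (fun x => by norm_num) (fun x _ => by norm_num)
    rwa [hone] at this
  have rc_univ : rc (univ : Set G) = 1 := by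
    refine le_antisymm (rc_le_one _) ?_
    refine le_csInf (hne _) ?_
    rintro r ⟨h, ⟨h0, h1⟩, rfl⟩
    have := hΛmono 1 h (fun x => by simpa using h1 x (mem_univ x))
    rwa [hone] at this
  -- the key upper bound: Λ g ≤ rc C for g supported in C, 0 ≤ g ≤ 1
  have lam_le_rc : ∀ (C : Set G) (g : C(G, ℝ)), (∀ x, 0 ≤ g x) → (∀ x, g x ≤ 1) →
      (∀ x ∉ C, g x = 0) → Λ g ≤ rc C := by
    intro C g g0 g1 gsupp
    refine le_csInf (hne C) ?_
    rintro r ⟨h, ⟨h0, h1⟩, rfl⟩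
    refine hΛmono g h fun x => ?_
    by_cases hx : x ∈ C
    · exact le_trans (g1 x) (h1 x hx)
    · rw [gsupp x hx]; exact h0 x
  -- additivity pieces
  have rc_sup_le : ∀ C₁ C₂ : Set G, rc (C₁ ∪ C₂) ≤ rc C₁ + rc C₂ := by
    intro C₁ C₂
    refine le_of_forall_pos_le_add ?_
    intro ε hε
    obtain ⟨r₁, hr₁, hr₁'⟩ := exists_lt_of_csInf_lt (hne C₁)
      (lt_add_of_pos_right (rc C₁) (half_pos hε))
    obtain ⟨r₂, hr₂, hr₂'⟩ := exists_lt_of_csInf_lt (hne C₂)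
      (lt_add_of_pos_right (rc C₂) (half_pos hε))
    obtain ⟨h₁, ⟨h₁0, h₁1⟩, rfl⟩ := hr₁
    obtain ⟨h₂, ⟨h₂0, h₂1⟩, rfl⟩ := hr₂
    have hfeas : rc (C₁ ∪ C₂) ≤ Λ (h₁ + h₂) := by
      refine rc_le _ _ (fun x => by
        simpa using add_nonneg (h₁0 x) (h₂0 x)) ?_
      rintro x (hx | hx)
      · simpa using le_add_of_le_of_nonneg (h₁1 x hx) (h₂0 x)
      · simpa using le_add_of_nonneg_of_le (h₁0 x) (h₂1 x hx)
    rw [map_add] at hfeas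
    linarith
  have rc_sup_add : ∀ C₁ C₂ : Set G, IsClosed C₁ → IsClosed C₂ → Disjoint C₁ C₂ →
      rc (C₁ ∪ C₂) = rc C₁ + rc C₂ := by
    intro C₁ C₂ hc₁ hc₂ hdisj
    refine le_antisymm (rc_sup_le C₁ C₂) ?_
    refine le_csInf (hne _) ?_
    rintro r ⟨h, ⟨h0, h1⟩, rfl⟩
    obtain ⟨u, hu0, hu1, hu01⟩ := exists_continuous_zero_one_of_isClosed hc₁ hc₂ hdisj
    have key1 : rc C₁ ≤ Λ (h * (1 - u)) := by
      refine rc_le _ _ (fun x => ?_) (fun x hx => ?_)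
      · have := (hu01 x).2
        have := h0 x
        simp only [ContinuousMap.mul_apply, ContinuousMap.sub_apply, ContinuousMap.one_apply]
        nlinarith
      · have hux : u x = 0 := hu0 hx
        simp only [ContinuousMap.mul_apply, ContinuousMap.sub_apply, ContinuousMap.one_apply, hux]
        simpa using h1 x (Or.inl hx)
    have key2 : rc C₂ ≤ Λ (h * u) := by
      refine rc_le _ _ (fun x => ?_) (fun x hx => ?_)
      · have := (hu01 x).1
        have := h0 x
        simp only [ContinuousMap.mul_apply]
        nlinarith
      · have hux : u x = 1 := hu1 hx
        simp only [ContinuousMap.mul_apply, hux, mul_one]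
        exact h1 x (Or.inr hx)
    have hsum : Λ (h * (1 - u)) + Λ (h * u) = Λ h := by
      rw [← map_add]
      congr 1
      ext x
      simp only [ContinuousMap.add_apply, ContinuousMap.mul_apply, ContinuousMap.sub_apply,
        ContinuousMap.one_apply]
      ring
    linarith
  -- the content
  set μc : Content G :=
    { toFun := fun C => Real.toNNReal (rc C)
      mono' := fun C₁ C₂ h => Real.toNNReal_mono (rc_mono _ _ h)
      sup_disjoint' := by
        intro C₁ C₂ hdisj h₁ h₂
        have : rc (C₁ ⊔ C₂ : Compacts G) = rc C₁ + rc C₂ := rc_sup_add _ _ h₁ h₂ hdisj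
        simp only [this]
        rw [Real.toNNReal_add (rc_nonneg _) (rc_nonneg _)]
      sup_le' := by
        intro C₁ C₂
        have h := rc_sup_le (C₁ : Set G) C₂
        calc Real.toNNReal (rc (C₁ ∪ C₂ : Set G)) ≤ Real.toNNReal (rc C₁ + rc C₂) :=
              Real.toNNReal_mono h
          _ = Real.toNNReal (rc C₁) + Real.toNNReal (rc C₂) :=
              Real.toNNReal_add (rc_nonneg _) (rc_nonneg _) } with hμc
  set μ : Measure G := μc.measure with hμ
  have hregular : μ.Regular := inferInstance
  -- total mass
  have hμuniv : μ univ = 1 := by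
    rw [hμ, Content.measure_apply _ MeasurableSet.univ,
      Content.outerMeasure_of_isOpen _ _ isOpen_univ]
    rw [μc.innerContent_of_isCompact isCompact_univ isOpen_univ]
    have h1 : rc (univ : Set G) = 1 := rc_univ
    show ((Real.toNNReal (rc (univ : Set G)) : ℝ≥0) : ℝ≥0∞) = 1
    rw [h1]
    norm_num
  have hprob : IsProbabilityMeasure μ := ⟨hμuniv⟩
  have hcontint : ∀ h : G → ℝ, Continuous h → Integrable h μ := by
    intro h hh
    refine hh.integrable_of_hasCompactSupport ?_
    exact IsCompact.of_isClosed_subset isCompact_univ (isClosed_tsupport h) (subset_univ _)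
  have key : ∀ (f : C(G, ℝ)), (∀ x, 0 ≤ f x) → ∀ N : ℕ, 0 < N →
      (N : ℝ) * Λ f ≤ 1 + (N : ℝ) * ∫ x, f x ∂μ := by
    intro f hf N hN
    obtain ⟨x₀, -, hx₀⟩ := isCompact_univ.exists_isMaxOn univ_nonempty
      ((continuous_const.mul f.continuous).continuousOn (s := univ))
    set L₀ : ℕ := Nat.ceil ((N : ℝ) * f x₀) with hL₀
    have hbound : ∀ x, (N : ℝ) * f x ≤ (L₀ : ℝ) + 1 := fun x =>
      le_trans (hx₀ (mem_univ x)) (le_trans (Nat.le_ceil _) (by show ((⌈(N:ℝ) * f x₀⌉₊ : ℕ) : ℝ) ≤ (L₀:ℝ) + 1; rw [← hL₀]; linarith))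
    set g : ℕ → C(G, ℝ) :=
      fun i => (((N : ℝ) • f - ContinuousMap.const G (i : ℝ)) ⊔ 0) ⊓ 1 with hg
    have hg_apply : ∀ i x, g i x = min (max ((N : ℝ) * f x - i) 0) 1 := by
      intro i x
      simp only [hg, ContinuousMap.inf_apply, ContinuousMap.sup_apply,
        ContinuousMap.sub_apply, ContinuousMap.smul_apply, ContinuousMap.const_apply,
        ContinuousMap.coe_zero, Pi.zero_apply, ContinuousMap.one_apply, smul_eq_mul]
    set C : ℕ → Set G := fun i => {x | (i : ℝ) ≤ (N : ℝ) * f x} with hC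
    have hCclosed : ∀ i, IsClosed (C i) := fun i =>
      isClosed_le continuous_const (continuous_const.mul f.continuous)
    have hCcompact : ∀ i, IsCompact (C i) := fun i => (hCclosed i).isCompact
    have hfx_nonneg : ∀ x, 0 ≤ (N : ℝ) * f x := fun x =>
      mul_nonneg (Nat.cast_nonneg N) (hf x)
    have hsum : ∑ i ∈ Finset.range (L₀ + 1), g i = (N : ℝ) • f := by
      ext x
      rw [ContinuousMap.sum_apply]
      have : ∀ i ∈ Finset.range (L₀ + 1), g i x = min (max ((N : ℝ) * f x - i) 0) 1 :=
        fun i _ => hg_apply i x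
      rw [Finset.sum_congr rfl this, clamp_sum _ (hfx_nonneg x)]
      have h1 : (N : ℝ) * f x ≤ ((L₀ + 1 : ℕ) : ℝ) := by push_cast; exact hbound x
      simp only [ContinuousMap.smul_apply, smul_eq_mul]
      exact min_eq_left h1
    have hterm : ∀ i : ℕ, Λ (g i) ≤ rc (C i) := by
      intro i
      refine lam_le_rc (C i) (g i) (fun x => ?_) (fun x => ?_) (fun x hx => ?_)
      · rw [hg_apply]; exact le_min (le_max_right _ _) zero_le_one
      · rw [hg_apply]; exact min_le_right _ _
      · have hx' : (N : ℝ) * f x - i ≤ 0 := by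
          simp only [hC, mem_setOf_eq, not_le] at hx
          linarith
        rw [hg_apply, max_eq_right hx', min_eq_left zero_le_one]
    have hrcμ : ∀ i : ℕ, rc (C i) ≤ (μ (C i)).toReal := by
      intro i
      have h1 : μc ⟨C i, hCcompact i⟩ ≤ μ (C i) := by
        rw [hμ, Content.measure_apply _ (hCclosed i).measurableSet]
        exact μc.le_outerMeasure_compacts ⟨C i, hCcompact i⟩
      have h2 := ENNReal.toReal_mono (measure_ne_top μ (C i)) h1
      have h3 : (μc ⟨C i, hCcompact i⟩).toReal = rc (C i) := by
        show ((Real.toNNReal (rc (C i)) : ℝ≥0) : ℝ≥0∞).toReal = rc (C i)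
        rw [ENNReal.coe_toReal, Real.coe_toNNReal _ (rc_nonneg (C i))]
      linarith
    have hintind : ∀ i : ℕ, Integrable ((C (i + 1)).indicator (fun _ => (1 : ℝ))) μ :=
      fun i => (integrable_const (1 : ℝ)).indicator (hCclosed (i + 1)).measurableSet
    have hind : ∀ i : ℕ, (μ (C (i + 1))).toReal
        = ∫ x, (C (i + 1)).indicator (fun _ => (1 : ℝ)) x ∂μ := by
      intro i
      rw [integral_indicator_const (1 : ℝ) (hCclosed (i + 1)).measurableSet]
      simp [measureReal_def]
    have hptwise : ∀ x,
        ∑ i ∈ Finset.range L₀, (C (i + 1)).indicator (fun _ => (1 : ℝ)) x ≤ (N : ℝ) * f x := by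
      intro x
      refine le_trans (le_of_eq (Finset.sum_congr rfl fun i _ => ?_))
        (ite_sum_le ((N : ℝ) * f x) (hfx_nonneg x) L₀)
      simp only [Set.indicator_apply, hC, mem_setOf_eq, Nat.cast_add, Nat.cast_one]
    calc (N : ℝ) * Λ f = Λ ((N : ℝ) • f) := by rw [_root_.map_smul, smul_eq_mul]
      _ = ∑ i ∈ Finset.range (L₀ + 1), Λ (g i) := by rw [← hsum, map_sum]
      _ = (∑ i ∈ Finset.range L₀, Λ (g (i + 1))) + Λ (g 0) := Finset.sum_range_succ' _ _
      _ ≤ (∑ i ∈ Finset.range L₀, (μ (C (i + 1))).toReal) + 1 := by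
          refine add_le_add (Finset.sum_le_sum fun i _ =>
            (hterm (i + 1)).trans (hrcμ (i + 1))) ?_
          exact (hterm 0).trans ((rc_mono _ _ (subset_univ _)).trans rc_univ.le)
      _ ≤ (∫ x, (N : ℝ) * f x ∂μ) + 1 := by
          have h4 : ∑ i ∈ Finset.range L₀, (μ (C (i + 1))).toReal
              = ∫ x, ∑ i ∈ Finset.range L₀, (C (i + 1)).indicator (fun _ => (1 : ℝ)) x ∂μ := by
            rw [integral_finset_sum _ (fun i _ => hintind i)]
            exact Finset.sum_congr rfl fun i _ => hind i
          rw [h4]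
          refine add_le_add_left (integral_mono
            (integrable_finset_sum _ (fun i _ => hintind i))
            (hcontint _ (continuous_const.mul f.continuous)) hptwise) 1
      _ = 1 + (N : ℝ) * ∫ x, f x ∂μ := by
          rw [integral_const_mul]; ring
  refine ⟨μ, hregular, hprob, ?_⟩
  intro f hf
  refine le_of_forall_pos_le_add ?_
  intro ε hε
  obtain ⟨N, hN⟩ := exists_nat_one_div_lt hε
  have h := key f hf (N + 1) (Nat.succ_pos N)
  have hNpos : (0 : ℝ) < (N : ℝ) + 1 := by positivity
  push_cast at h
  have h1 : ((N : ℝ) + 1) * (1 / ((N : ℝ) + 1)) = 1 := by field_simp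
  nlinarith [mul_lt_mul_of_pos_left hN hNpos]

end RMK


/-- The closed unit ball of the dual of `X`, equipped with the weak-star topology. -/
noncomputable def dualBall (𝕜 X : Type*) [RCLike 𝕜] [NormedAddCommGroup X]
    [NormedSpace 𝕜 X] : Set (WeakDual 𝕜 X) :=
  {φ | ‖WeakDual.toStrongDual φ‖ ≤ 1}

lemma isCompact_dualBall (𝕜 X : Type*) [RCLike 𝕜] [NormedAddCommGroup X]
    [NormedSpace 𝕜 X] : IsCompact (dualBall 𝕜 X) := by
  have : dualBall 𝕜 X = WeakDual.toStrongDual ⁻¹' Metric.closedBall 0 1 := by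
    ext φ
    simp [dualBall, Metric.mem_closedBall, dist_zero_right]
  rw [this]
  exact WeakDual.isCompact_closedBall (𝕜 := 𝕜) 0 1

instance dualBall.instCompactSpace (𝕜 X : Type*) [RCLike 𝕜] [NormedAddCommGroup X]
    [NormedSpace 𝕜 X] : CompactSpace (dualBall 𝕜 X) :=
  isCompact_iff_compactSpace.mp (isCompact_dualBall 𝕜 X)

instance dualBall.instNonempty (𝕜 X : Type*) [RCLike 𝕜] [NormedAddCommGroup X]
    [NormedSpace 𝕜 X] : Nonempty (dualBall 𝕜 X) :=
  ⟨⟨0, by simp [dualBall]⟩⟩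


noncomputable instance (𝕜 : Type*) {n : ℕ} (X : Fin n → Type*) (F : Type*) [RCLike 𝕜]
    [∀ i, NormedAddCommGroup (X i)] [∀ i, NormedSpace 𝕜 (X i)]
    [NormedAddCommGroup F] [NormedSpace 𝕜 F] :
    MeasurableSpace ((Π i, dualBall 𝕜 (X i)) × dualBall 𝕜 (StrongDual 𝕜 F)) :=
  borel _

instance (𝕜 : Type*) {n : ℕ} (X : Fin n → Type*) (F : Type*) [RCLike 𝕜]
    [∀ i, NormedAddCommGroup (X i)] [∀ i, NormedSpace 𝕜 (X i)]
    [NormedAddCommGroup F] [NormedSpace 𝕜 F] :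
    BorelSpace ((Π i, dualBall 𝕜 (X i)) × dualBall 𝕜 (StrongDual 𝕜 F)) := ⟨rfl⟩

/-- X. Mujica's domination theorem for `τ(p)`-summing multilinear mappings: a continuous
`n`-linear map `T : X₁ × ⋯ × Xₙ → F` is `τ(p)`-summing if and only if it satisfies a
Pietsch-type domination by a regular Borel probability measure on
`K = B_{X₁'} × ⋯ × B_{Xₙ'} × B_{F''}`, the product of the closed unit balls of the duals
and of the bidual, each with its weak-star topology. -/
theorem tau_p_summing_multilinear_domination
    {𝕜 : Type*} [RCLike 𝕜] {n : ℕ} (hn : 0 < n)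
    {X : Fin n → Type*} [∀ i, NormedAddCommGroup (X i)] [∀ i, NormedSpace 𝕜 (X i)]
    [∀ i, CompleteSpace (X i)]
    {F : Type*} [NormedAddCommGroup F] [NormedSpace 𝕜 F] [CompleteSpace F]
    (p : ℝ) (hp : 0 < p)
    (T : ContinuousMultilinearMap 𝕜 X F) :
    (∃ C₁ > 0, ∀ (m : ℕ) (x : Fin m → Π i, X i) (b : Fin m → StrongDual 𝕜 F),
        ∑ j, ‖(b j) (T (x j))‖ ^ p ≤
          C₁ * ⨆ k : (Π i, dualBall 𝕜 (X i)) × dualBall 𝕜 (StrongDual 𝕜 F),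
            ∑ j, ((∏ i, ‖(k.1 i : WeakDual 𝕜 (X i)) (x j i)‖) *
              ‖(k.2 : WeakDual 𝕜 (StrongDual 𝕜 F)) (b j)‖) ^ p) ↔
    (∃ C > 0,
      ∃ μ : Measure ((Π i, dualBall 𝕜 (X i)) × dualBall 𝕜 (StrongDual 𝕜 F)),
        μ.Regular ∧ IsProbabilityMeasure μ ∧
        ∀ (x : Π i, X i) (b : StrongDual 𝕜 F),
          ‖b (T x)‖ ≤
            C * (∫ k, ((∏ i, ‖(k.1 i : WeakDual 𝕜 (X i)) (x i)‖) *
              ‖(k.2 : WeakDual 𝕜 (StrongDual 𝕜 F)) b‖) ^ p ∂μ) ^ (1 / p)) := by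
  classical
  have hBcont : ∀ (x : Π i, X i) (b : StrongDual 𝕜 F),
      Continuous (fun k : (Π i, dualBall 𝕜 (X i)) × dualBall 𝕜 (StrongDual 𝕜 F) =>
        (∏ i, ‖(k.1 i : WeakDual 𝕜 (X i)) (x i)‖) *
          ‖(k.2 : WeakDual 𝕜 (StrongDual 𝕜 F)) b‖) := by
    intro x b
    refine Continuous.mul ?_ ?_
    · refine continuous_finset_prod _ (fun i _ => ?_)
      exact ((WeakDual.eval_continuous (x i)).comp
        (continuous_subtype_val.comp ((continuous_apply i).comp continuous_fst))).norm
    · exact ((WeakDual.eval_continuous b).comp (continuous_subtype_val.comp continuous_snd)).norm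
  have hΦcont : ∀ (x : Π i, X i) (b : StrongDual 𝕜 F),
      Continuous (fun k : (Π i, dualBall 𝕜 (X i)) × dualBall 𝕜 (StrongDual 𝕜 F) =>
        ((∏ i, ‖(k.1 i : WeakDual 𝕜 (X i)) (x i)‖) *
          ‖(k.2 : WeakDual 𝕜 (StrongDual 𝕜 F)) b‖) ^ p) := by
    intro x b
    refine continuous_iff_continuousAt.mpr fun k => ?_
    exact (Real.continuousAt_rpow_const _ p (Or.inr hp.le)).comp (hBcont x b).continuousAt
  have hΦnonneg : ∀ (x : Π i, X i) (b : StrongDual 𝕜 F)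
      (k : (Π i, dualBall 𝕜 (X i)) × dualBall 𝕜 (StrongDual 𝕜 F)),
      (0:ℝ) ≤ ((∏ i, ‖(k.1 i : WeakDual 𝕜 (X i)) (x i)‖) *
          ‖(k.2 : WeakDual 𝕜 (StrongDual 𝕜 F)) b‖) ^ p := by
    intro x b k
    refine Real.rpow_nonneg ?_ p
    positivity
  constructor
  · rintro ⟨C₁, hC₁, hsum⟩
    set i₀ : Fin n := ⟨0, hn⟩ with hi₀
    set Φ : (Π i, X i) → StrongDual 𝕜 F →
        C((Π i, dualBall 𝕜 (X i)) × dualBall 𝕜 (StrongDual 𝕜 F), ℝ) :=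
      fun x b => ⟨fun k => ((∏ i, ‖(k.1 i : WeakDual 𝕜 (X i)) (x i)‖) *
        ‖(k.2 : WeakDual 𝕜 (StrongDual 𝕜 F)) b‖) ^ p, hΦcont x b⟩ with hΦdef
    set A : (Π i, X i) → StrongDual 𝕜 F → ℝ := fun x b => ‖b (T x)‖ ^ p with hAdef
    set Q : Set C((Π i, dualBall 𝕜 (X i)) × dualBall 𝕜 (StrongDual 𝕜 F), ℝ) :=
      {q | ∃ (m : ℕ) (x : Fin m → Π i, X i) (b : Fin m → StrongDual 𝕜 F),
        q = (∑ j, A (x j) (b j)) •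
              (1 : C((Π i, dualBall 𝕜 (X i)) × dualBall 𝕜 (StrongDual 𝕜 F), ℝ)) -
            C₁ • ∑ j, Φ (x j) (b j)} with hQdef
    set P : Set C((Π i, dualBall 𝕜 (X i)) × dualBall 𝕜 (StrongDual 𝕜 F), ℝ) :=
      {g | ∀ k, 0 < g k} with hPdef
    -- basic closure properties of Q
    have hQzero : (0 : C((Π i, dualBall 𝕜 (X i)) × dualBall 𝕜 (StrongDual 𝕜 F), ℝ)) ∈ Q := by
      refine ⟨0, fun j => j.elim0, fun j => j.elim0, ?_⟩
      simp
    have hQadd : ∀ q₁ ∈ Q, ∀ q₂ ∈ Q, q₁ + q₂ ∈ Q := by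
      rintro q₁ ⟨m₁, x₁, b₁, rfl⟩ q₂ ⟨m₂, x₂, b₂, rfl⟩
      refine ⟨m₁ + m₂, Fin.append x₁ x₂, Fin.append b₁ b₂, ?_⟩
      have hA : ∑ j : Fin (m₁ + m₂), A (Fin.append x₁ x₂ j) (Fin.append b₁ b₂ j)
          = (∑ j, A (x₁ j) (b₁ j)) + ∑ j, A (x₂ j) (b₂ j) := by
        rw [Fin.sum_univ_add]
        simp [Fin.append_left, Fin.append_right]
      have hΦs : ∑ j : Fin (m₁ + m₂), Φ (Fin.append x₁ x₂ j) (Fin.append b₁ b₂ j)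
          = (∑ j, Φ (x₁ j) (b₁ j)) + ∑ j, Φ (x₂ j) (b₂ j) := by
        rw [Fin.sum_univ_add]
        simp [Fin.append_left, Fin.append_right]
      rw [hA, hΦs, add_smul, smul_add]
      abel
    have hQsmul : ∀ (t : ℝ), 0 ≤ t → ∀ q ∈ Q, t • q ∈ Q := by
      intro t ht q hq
      obtain ⟨m, x, b, rfl⟩ := hq
      rcases ht.eq_or_lt with rfl | ht
      · simpa using hQzero
      · set c : 𝕜 := ((t ^ (1/p) : ℝ) : 𝕜) with hcdef
        have hnormc : ‖c‖ = t ^ (1/p) := by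
          rw [hcdef, RCLike.norm_ofReal, abs_of_nonneg (Real.rpow_nonneg ht.le _)]
        have hroot : (t ^ (1/p)) ^ p = t := by
          rw [← Real.rpow_mul ht.le, one_div_mul_cancel hp.ne', Real.rpow_one]
        refine ⟨m, fun j => Function.update (x j) i₀ (c • x j i₀), b, ?_⟩
        have hA' : ∀ j : Fin m, A (Function.update (x j) i₀ (c • x j i₀)) (b j)
            = t * A (x j) (b j) := by
          intro j
          show ‖(b j) (T (Function.update (x j) i₀ (c • x j i₀)))‖ ^ p
            = t * ‖(b j) (T (x j))‖ ^ p
          rw [T.map_update_smul (x j) i₀ c (x j i₀), Function.update_eq_self, _root_.map_smul,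
            norm_smul, hnormc, Real.mul_rpow (Real.rpow_nonneg ht.le _) (norm_nonneg _), hroot]
        have hΦ' : ∀ j : Fin m, Φ (Function.update (x j) i₀ (c • x j i₀)) (b j)
            = t • Φ (x j) (b j) := by
          intro j
          ext k
          show ((∏ i, ‖(k.1 i : WeakDual 𝕜 (X i))
                (Function.update (x j) i₀ (c • x j i₀) i)‖) *
              ‖(k.2 : WeakDual 𝕜 (StrongDual 𝕜 F)) (b j)‖) ^ p
            = (t • Φ (x j) (b j)) k
          have h1 : ∀ i, ‖(k.1 i : WeakDual 𝕜 (X i))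
                (Function.update (x j) i₀ (c • x j i₀) i)‖
              = Function.update (fun i => ‖(k.1 i : WeakDual 𝕜 (X i)) (x j i)‖) i₀
                  (t ^ (1/p) * ‖(k.1 i₀ : WeakDual 𝕜 (X i₀)) (x j i₀)‖) i := by
            intro i
            rcases eq_or_ne i i₀ with rfl | hi
            · rw [Function.update_self, Function.update_self, _root_.map_smul, norm_smul, hnormc]
            · rw [Function.update_of_ne hi, Function.update_of_ne hi]
          rw [Finset.prod_congr rfl (fun i _ => h1 i),
            Finset.prod_update_of_mem (Finset.mem_univ i₀)]
          have h2 : ∏ i, ‖(k.1 i : WeakDual 𝕜 (X i)) (x j i)‖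
              = ‖(k.1 i₀ : WeakDual 𝕜 (X i₀)) (x j i₀)‖ *
                  ∏ i ∈ Finset.univ \ {i₀}, ‖(k.1 i : WeakDual 𝕜 (X i)) (x j i)‖ :=
            Finset.prod_eq_mul_prod_sdiff_singleton_of_mem (Finset.mem_univ i₀) _
          have h3 : (t ^ (1/p) * ‖(k.1 i₀ : WeakDual 𝕜 (X i₀)) (x j i₀)‖) *
                (∏ i ∈ Finset.univ \ {i₀}, ‖(k.1 i : WeakDual 𝕜 (X i)) (x j i)‖) *
                ‖(k.2 : WeakDual 𝕜 (StrongDual 𝕜 F)) (b j)‖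
              = t ^ (1/p) * ((∏ i, ‖(k.1 i : WeakDual 𝕜 (X i)) (x j i)‖) *
                ‖(k.2 : WeakDual 𝕜 (StrongDual 𝕜 F)) (b j)‖) := by
            rw [h2]; ring
          rw [h3, Real.mul_rpow (Real.rpow_nonneg ht.le _) (by positivity), hroot,
            ContinuousMap.smul_apply, smul_eq_mul]
          rfl
        rw [Finset.sum_congr rfl (fun j _ => hA' j), Finset.sum_congr rfl (fun j _ => hΦ' j),
          ← Finset.mul_sum, ← Finset.smul_sum, smul_sub, smul_smul, smul_comm t C₁]
    have hQconvex : Convex ℝ Q := by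
      intro q₁ h₁ q₂ h₂ a b' ha hb' hab
      exact hQadd _ (hQsmul a ha _ h₁) _ (hQsmul b' hb' _ h₂)
    -- P is open and convex
    have hPopen : IsOpen P := by
      rw [Metric.isOpen_iff]
      intro g hg
      obtain ⟨k₀, -, hk₀⟩ := isCompact_univ.exists_isMinOn univ_nonempty
        g.continuous.continuousOn
      refine ⟨g k₀, hg k₀, fun h hh => ?_⟩
      intro k
      have h1 : ‖h - g‖ < g k₀ := by rwa [Metric.mem_ball, dist_eq_norm] at hh
      have h2 : |(h - g) k| ≤ ‖h - g‖ := by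
        simpa [Real.norm_eq_abs] using ContinuousMap.norm_coe_le_norm (h - g) k
      have h2' : |h k - g k| ≤ ‖h - g‖ := by simpa using h2
      have h3 : g k₀ ≤ g k := hk₀ (mem_univ k)
      have := abs_le.mp h2'
      show (0:ℝ) < h k
      linarith [this.1]
    have hPconvex : Convex ℝ P := by
      intro g hg h hh a b' ha hb' hab
      intro k
      have hval : (a • g + b' • h) k = a * g k + b' * h k := by simp
      show (0:ℝ) < (a • g + b' • h) k
      rw [hval]
      rcases ha.eq_or_lt with rfl | ha'
      · have hb1 : b' = 1 := by linarith
        rw [hb1]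
        simpa using hh k
      · exact add_pos_of_pos_of_nonneg (mul_pos ha' (hg k))
          (mul_nonneg hb' (hh k).le)
    -- P and Q are disjoint
    have hdisj : Disjoint P Q := by
      rw [Set.disjoint_left]
      rintro q hqP ⟨m, x, b, rfl⟩
      obtain ⟨k₀, -, hk₀⟩ := isCompact_univ.exists_isMaxOn univ_nonempty
        (continuous_finset_sum Finset.univ
          (fun j _ => hΦcont (x j) (b j))).continuousOn
      have h2 : (⨆ k : (Π i, dualBall 𝕜 (X i)) × dualBall 𝕜 (StrongDual 𝕜 F),
            ∑ j, ((∏ i, ‖(k.1 i : WeakDual 𝕜 (X i)) (x j i)‖) *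
              ‖(k.2 : WeakDual 𝕜 (StrongDual 𝕜 F)) (b j)‖) ^ p)
          ≤ ∑ j, ((∏ i, ‖(k₀.1 i : WeakDual 𝕜 (X i)) (x j i)‖) *
              ‖(k₀.2 : WeakDual 𝕜 (StrongDual 𝕜 F)) (b j)‖) ^ p :=
        ciSup_le fun k => hk₀ (mem_univ k)
      have h1 := hsum m x b
      have h4 := hqP k₀
      have h5 : ((∑ j, A (x j) (b j)) •
            (1 : C((Π i, dualBall 𝕜 (X i)) × dualBall 𝕜 (StrongDual 𝕜 F), ℝ)) -
            C₁ • ∑ j, Φ (x j) (b j)) k₀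
          = (∑ j, A (x j) (b j)) -
            C₁ * ∑ j, ((∏ i, ‖(k₀.1 i : WeakDual 𝕜 (X i)) (x j i)‖) *
              ‖(k₀.2 : WeakDual 𝕜 (StrongDual 𝕜 F)) (b j)‖) ^ p := by
        simp [hΦdef]
      rw [h5] at h4
      have h6 : ∑ j, ‖(b j) (T (x j))‖ ^ p = ∑ j, A (x j) (b j) := rfl
      rw [h6] at h1
      have h7 := mul_le_mul_of_nonneg_left h2 hC₁.le
      linarith
    -- separation
    obtain ⟨f, u, hfP, hfQ⟩ := geometric_hahn_banach_open hPconvex hPopen hQconvex hdisj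
    have hu0 : u ≤ 0 := by simpa using hfQ 0 hQzero
    have h1P : (1 : C((Π i, dualBall 𝕜 (X i)) × dualBall 𝕜 (StrongDual 𝕜 F), ℝ)) ∈ P := by
      intro k
      show (0:ℝ) < (1 : C((Π i, dualBall 𝕜 (X i)) × dualBall 𝕜 (StrongDual 𝕜 F), ℝ)) k
      simp
    have hf1 : f 1 < 0 := lt_of_lt_of_le (hfP 1 h1P) hu0
    have hfnonneg : ∀ g : C((Π i, dualBall 𝕜 (X i)) × dualBall 𝕜 (StrongDual 𝕜 F), ℝ),
        (∀ k, 0 ≤ g k) → f g ≤ 0 := by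
      intro g hg
      by_contra hcon
      push_neg at hcon
      have hne : f 1 ≠ 0 := ne_of_lt hf1
      set s : ℝ := f g / (-(f 1)) with hsdef
      have hspos : 0 < s := div_pos hcon (by linarith)
      have hmem : g + s • (1 : C((Π i, dualBall 𝕜 (X i)) ×
          dualBall 𝕜 (StrongDual 𝕜 F), ℝ)) ∈ P := by
        intro k
        show (0:ℝ) < (g + s • (1 : C((Π i, dualBall 𝕜 (X i)) ×
          dualBall 𝕜 (StrongDual 𝕜 F), ℝ))) k
        have : (g + s • (1 : C((Π i, dualBall 𝕜 (X i)) ×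
            dualBall 𝕜 (StrongDual 𝕜 F), ℝ))) k = g k + s := by simp
        rw [this]
        linarith [hg k]
      have hlt := hfP _ hmem
      rw [map_add, _root_.map_smul, smul_eq_mul] at hlt
      have hcalc : s * f 1 = - f g := by
        rw [hsdef, div_mul_eq_mul_div, div_eq_iff (neg_ne_zero.mpr hne)]
        ring
      linarith
    have hfQnonneg : ∀ q ∈ Q, 0 ≤ f q := by
      intro q hq
      by_contra hcon
      push_neg at hcon
      have ht : 0 < (u - 1) / f q := div_pos_iff.mpr (Or.inr ⟨by linarith, hcon⟩)
      have hmem := hQsmul _ ht.le q hq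
      have hle := hfQ _ hmem
      rw [_root_.map_smul, smul_eq_mul, div_mul_cancel₀ _ (ne_of_lt hcon)] at hle
      linarith
    -- the positive normalized functional
    set d : ℝ := -(f 1) with hddef
    have hd : 0 < d := by rw [hddef]; linarith
    set Λ : C((Π i, dualBall 𝕜 (X i)) × dualBall 𝕜 (StrongDual 𝕜 F), ℝ) →ₗ[ℝ] ℝ :=
      d⁻¹ • (-(f.toLinearMap)) with hΛdef
    have hΛapp : ∀ g, Λ g = d⁻¹ * (-(f g)) := fun g => rfl
    have hΛpos : ∀ g : C((Π i, dualBall 𝕜 (X i)) × dualBall 𝕜 (StrongDual 𝕜 F), ℝ),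
        (∀ k, 0 ≤ g k) → 0 ≤ Λ g := by
      intro g hg
      rw [hΛapp]
      have h1 := hfnonneg g hg
      exact mul_nonneg (inv_nonneg.mpr hd.le) (by linarith)
    have hΛone : Λ (1 : C((Π i, dualBall 𝕜 (X i)) ×
        dualBall 𝕜 (StrongDual 𝕜 F), ℝ)) = 1 := by
      rw [hΛapp]
      have : -(f 1) = d := rfl
      rw [this, inv_mul_cancel₀ hd.ne']
    obtain ⟨μ, hreg, hprob, hint⟩ :=
      exists_regular_prob_measure_of_positive_functional Λ hΛpos hΛone
    refine ⟨C₁ ^ (1/p), Real.rpow_pos_of_pos hC₁ _, μ, hreg, hprob, ?_⟩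
    intro x b
    show ‖b (T x)‖ ≤ C₁ ^ (1/p) * (∫ k, (Φ x b) k ∂μ) ^ (1/p)
    have hqmem : (A x b) • (1 : C((Π i, dualBall 𝕜 (X i)) ×
        dualBall 𝕜 (StrongDual 𝕜 F), ℝ)) - C₁ • Φ x b ∈ Q := by
      refine ⟨1, fun _ => x, fun _ => b, ?_⟩
      simp
    have h1 := hfQnonneg _ hqmem
    have h2 : Λ ((A x b) • (1 : C((Π i, dualBall 𝕜 (X i)) ×
        dualBall 𝕜 (StrongDual 𝕜 F), ℝ)) - C₁ • Φ x b) ≤ 0 := by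
      rw [hΛapp]
      exact mul_nonpos_iff.mpr (Or.inl ⟨inv_nonneg.mpr hd.le, by linarith⟩)
    rw [map_sub, _root_.map_smul, _root_.map_smul, hΛone, smul_eq_mul, smul_eq_mul, mul_one] at h2
    have h3 : Λ (Φ x b) ≤ ∫ k, (Φ x b) k ∂μ := hint _ (fun k => hΦnonneg x b k)
    have h4 : A x b ≤ C₁ * ∫ k, (Φ x b) k ∂μ := by
      nlinarith [mul_le_mul_of_nonneg_left h3 hC₁.le]
    have hI0 : (0:ℝ) ≤ ∫ k, (Φ x b) k ∂μ := integral_nonneg (fun k => hΦnonneg x b k)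
    have hA0 : (0:ℝ) ≤ A x b := Real.rpow_nonneg (norm_nonneg _) p
    have h5 : (A x b) ^ (1/p) ≤ (C₁ * ∫ k, (Φ x b) k ∂μ) ^ (1/p) :=
      Real.rpow_le_rpow hA0 h4 (by positivity)
    have h6 : (A x b) ^ (1/p) = ‖b (T x)‖ := by
      show ((‖b (T x)‖ ^ p : ℝ)) ^ (1/p) = ‖b (T x)‖
      rw [← Real.rpow_mul (norm_nonneg _), mul_one_div, div_self hp.ne', Real.rpow_one]
    have h7 : (C₁ * ∫ k, (Φ x b) k ∂μ) ^ (1/p)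
        = C₁ ^ (1/p) * (∫ k, (Φ x b) k ∂μ) ^ (1/p) := Real.mul_rpow hC₁.le hI0
    rw [← h6, ← h7]
    exact h5
  · rintro ⟨C, hC, μ, hreg, hprob, hdom⟩
    refine ⟨C ^ p, Real.rpow_pos_of_pos hC p, ?_⟩
    intro m x b
    have hcompsupp : ∀ h : (Π i, dualBall 𝕜 (X i)) × dualBall 𝕜 (StrongDual 𝕜 F) → ℝ,
        Continuous h → Integrable h μ := by
      intro h hh
      exact hh.integrable_of_hasCompactSupport
        (IsCompact.of_isClosed_subset isCompact_univ (isClosed_tsupport h) (subset_univ _))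
    set Fs : (Π i, dualBall 𝕜 (X i)) × dualBall 𝕜 (StrongDual 𝕜 F) → ℝ :=
      fun k => ∑ j, ((∏ i, ‖(k.1 i : WeakDual 𝕜 (X i)) (x j i)‖) *
        ‖(k.2 : WeakDual 𝕜 (StrongDual 𝕜 F)) (b j)‖) ^ p with hFsdef
    have hFscont : Continuous Fs := continuous_finset_sum _ fun j _ => hΦcont (x j) (b j)
    have hbddFs : BddAbove (Set.range Fs) := (isCompact_range hFscont).bddAbove
    have step1 : ∀ j : Fin m, ‖(b j) (T (x j))‖ ^ p ≤
        C ^ p * ∫ k, ((∏ i, ‖(k.1 i : WeakDual 𝕜 (X i)) (x j i)‖) *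
          ‖(k.2 : WeakDual 𝕜 (StrongDual 𝕜 F)) (b j)‖) ^ p ∂μ := by
      intro j
      have h0 : (0:ℝ) ≤ ∫ k, ((∏ i, ‖(k.1 i : WeakDual 𝕜 (X i)) (x j i)‖) *
          ‖(k.2 : WeakDual 𝕜 (StrongDual 𝕜 F)) (b j)‖) ^ p ∂μ :=
        integral_nonneg (fun k => hΦnonneg (x j) (b j) k)
      have h2 : ‖(b j) (T (x j))‖ ^ p ≤
          (C * (∫ k, ((∏ i, ‖(k.1 i : WeakDual 𝕜 (X i)) (x j i)‖) *
            ‖(k.2 : WeakDual 𝕜 (StrongDual 𝕜 F)) (b j)‖) ^ p ∂μ) ^ (1/p)) ^ p :=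
        Real.rpow_le_rpow (norm_nonneg _) (hdom (x j) (b j)) hp.le
      rwa [Real.mul_rpow hC.le (Real.rpow_nonneg h0 _), ← Real.rpow_mul h0,
        one_div_mul_cancel hp.ne', Real.rpow_one] at h2
    calc ∑ j, ‖(b j) (T (x j))‖ ^ p
        ≤ ∑ j, C ^ p * ∫ k, ((∏ i, ‖(k.1 i : WeakDual 𝕜 (X i)) (x j i)‖) *
            ‖(k.2 : WeakDual 𝕜 (StrongDual 𝕜 F)) (b j)‖) ^ p ∂μ :=
          Finset.sum_le_sum fun j _ => step1 j
      _ = C ^ p * ∫ k, Fs k ∂μ := by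
          rw [← Finset.mul_sum, ← integral_finset_sum _ (fun j _ => hcompsupp _ (hΦcont _ _))]
      _ ≤ C ^ p * ⨆ k, Fs k := by
          refine mul_le_mul_of_nonneg_left ?_ (Real.rpow_nonneg hC.le p)
          calc ∫ k, Fs k ∂μ ≤ ∫ _, (⨆ k', Fs k') ∂μ :=
                integral_mono (hcompsupp _ hFscont) (integrable_const _)
                  (fun k => le_ciSup hbddFs k)
            _ = ⨆ k', Fs k' := by simp
end

section
/- Let X and Y be Banach spaces over 𝕂, let α > 0 and 0 < p < ∞, and let f : X → Y be any mapping with f(0) = 0. Then there is a constant C₁ > 0 such that ∑_{j=1}^m ‖f(x_j)‖^{p/α} ≤ C₁ · sup_{φ ∈ B_{X'}} ∑_{j=1}^m |φ(x_j)|^p for all m ∈ ℕ and x₁,…,x_m ∈ X, if and only if there exist a constant C > 0 and a regular Borel probability measure μ on the closed unit ball B_{X'} of X' equipped with the weak-star topology such that ‖f(x)‖^{1/α} ≤ C · (∫_{B_{X'}} |φ(x)|^p dμ(φ))^{1/p} for all x ∈ X. -/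
open MeasureTheory

noncomputable instance (𝕜 X : Type*) [RCLike 𝕜] [NormedAddCommGroup X] [NormedSpace 𝕜 X] :
    MeasurableSpace (dualBall 𝕜 X) := borel _

instance (𝕜 X : Type*) [RCLike 𝕜] [NormedAddCommGroup X] [NormedSpace 𝕜 X] :
    BorelSpace (dualBall 𝕜 X) := ⟨rfl⟩

set_option linter.unusedSectionVars false
set_option linter.unusedVariables false
set_option maxHeartbeats 1000000

open Set
open scoped ENNReal NNReal

section RMKLite

variable {A : Type*} [TopologicalSpace A] [CompactSpace A] [T2Space A]
variable (Λ : C(A, ℝ) →L[ℝ] ℝ)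

def pietschPos (K : Set A) : Set C(A, ℝ) :=
  {g | (∀ a, 0 ≤ g a) ∧ ∀ a ∈ K, 1 ≤ g a}

noncomputable def pietschRC (K : Set A) : ℝ :=
  sInf (Λ '' pietschPos K)

variable {Λ}
variable (hΛ : ∀ g : C(A, ℝ), (∀ a, 0 ≤ g a) → 0 ≤ Λ g)

theorem pietschPos_one (K : Set A) : (1 : C(A, ℝ)) ∈ pietschPos K :=
  ⟨fun _ => zero_le_one, fun _ _ => le_refl _⟩

theorem pietschPos_nonempty (K : Set A) : (Λ '' pietschPos K).Nonempty :=
  ⟨Λ 1, ⟨1, pietschPos_one K, rfl⟩⟩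

include hΛ

theorem pietschPos_bddBelow (K : Set A) : BddBelow (Λ '' pietschPos K) := by
  refine ⟨0, ?_⟩
  rintro y ⟨g, hg, rfl⟩
  exact hΛ g hg.1

theorem pietschRC_nonneg (K : Set A) : 0 ≤ pietschRC Λ K :=
  le_csInf (pietschPos_nonempty K) (by rintro y ⟨g, hg, rfl⟩; exact hΛ g hg.1)

theorem pietschRC_le {K : Set A} {g : C(A, ℝ)} (hg : g ∈ pietschPos K) :
    pietschRC Λ K ≤ Λ g :=
  csInf_le (pietschPos_bddBelow hΛ K) ⟨g, hg, rfl⟩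

theorem pietschRC_mono {K₁ K₂ : Set A} (h : K₁ ⊆ K₂) :
    pietschRC Λ K₁ ≤ pietschRC Λ K₂ :=
  csInf_le_csInf (pietschPos_bddBelow hΛ K₁) (pietschPos_nonempty K₂)
    (Set.image_mono fun g hg => ⟨hg.1, fun a ha => hg.2 a (h ha)⟩)

theorem pietschRC_exists_lt (K : Set A) {ε : ℝ} (hε : 0 < ε) :
    ∃ g ∈ pietschPos K, Λ g < pietschRC Λ K + ε := by
  obtain ⟨y, ⟨g, hg, rfl⟩, hy⟩ :=
    exists_lt_of_csInf_lt (pietschPos_nonempty K)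
      (lt_add_of_pos_right (pietschRC Λ K) hε)
  exact ⟨g, hg, hy⟩

theorem pietschLam_mono {g h : C(A, ℝ)} (hgh : ∀ a, g a ≤ h a) : Λ g ≤ Λ h := by
  have := hΛ (h - g) (fun a => by simpa using sub_nonneg.2 (hgh a))
  rw [map_sub] at this
  linarith

theorem pietschRC_univ : pietschRC Λ (univ : Set A) = Λ 1 := by
  refine le_antisymm (pietschRC_le hΛ (pietschPos_one _)) (le_csInf (pietschPos_nonempty _) ?_)
  rintro y ⟨g, hg, rfl⟩
  exact pietschLam_mono hΛ (fun a => by simpa using hg.2 a (mem_univ a))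

theorem pietschRC_sup_le (K₁ K₂ : TopologicalSpace.Compacts A) :
    pietschRC Λ (↑(K₁ ⊔ K₂) : Set A) ≤ pietschRC Λ K₁ + pietschRC Λ K₂ := by
  refine le_of_forall_pos_le_add fun ε hε => ?_
  obtain ⟨g₁, hg₁, hΛg₁⟩ := pietschRC_exists_lt hΛ (K₁ : Set A) (half_pos hε)
  obtain ⟨g₂, hg₂, hΛg₂⟩ := pietschRC_exists_lt hΛ (K₂ : Set A) (half_pos hε)
  have hmem : g₁ + g₂ ∈ pietschPos (↑(K₁ ⊔ K₂) : Set A) := by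
    constructor
    · intro a; simpa using add_nonneg (hg₁.1 a) (hg₂.1 a)
    · rintro a ha
      rcases ha with ha | ha
      · simpa using le_add_of_le_of_nonneg (hg₁.2 a ha) (hg₂.1 a)
      · simpa using le_add_of_nonneg_of_le (hg₁.1 a) (hg₂.2 a ha)
  calc pietschRC Λ (↑(K₁ ⊔ K₂) : Set A) ≤ Λ (g₁ + g₂) := pietschRC_le hΛ hmem
    _ = Λ g₁ + Λ g₂ := map_add _ _ _
    _ ≤ pietschRC Λ K₁ + pietschRC Λ K₂ + ε := by linarith

theorem pietschRC_sup_disjoint (K₁ K₂ : TopologicalSpace.Compacts A)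
    (hd : Disjoint (K₁ : Set A) (K₂ : Set A)) :
    pietschRC Λ (↑(K₁ ⊔ K₂) : Set A) = pietschRC Λ K₁ + pietschRC Λ K₂ := by
  refine le_antisymm (pietschRC_sup_le hΛ K₁ K₂) (le_csInf (pietschPos_nonempty _) ?_)
  rintro y ⟨g, hg, rfl⟩
  obtain ⟨w, hw₁, hw₂, hw01⟩ :=
    exists_continuous_zero_one_of_isClosed K₁.isCompact.isClosed K₂.isCompact.isClosed hd
  have h₁ : g * (1 - w) ∈ pietschPos (K₁ : Set A) := by
    constructor
    · intro a
      have := (hw01 a).2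
      have := (hw01 a).1
      have := hg.1 a
      simp only [ContinuousMap.mul_apply, ContinuousMap.sub_apply, ContinuousMap.one_apply]
      nlinarith
    · intro a ha
      have h1 : 1 ≤ g a := hg.2 a (Or.inl ha)
      have h0 : w a = 0 := hw₁ ha
      simp [ContinuousMap.mul_apply, ContinuousMap.sub_apply, h0, h1]
  have h₂ : g * w ∈ pietschPos (K₂ : Set A) := by
    constructor
    · intro a
      exact mul_nonneg (hg.1 a) (hw01 a).1
    · intro a ha
      have h1 : 1 ≤ g a := hg.2 a (Or.inr ha)
      have h0 : w a = 1 := hw₂ ha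
      simp [ContinuousMap.mul_apply, h0, h1]
  have key : Λ (g * (1 - w)) + Λ (g * w) = Λ g := by
    rw [← map_add]
    congr 1
    ext a
    simp [ContinuousMap.mul_apply, ContinuousMap.sub_apply]
    ring
  have := add_le_add (pietschRC_le hΛ h₁) (pietschRC_le hΛ h₂)
  rw [key] at this
  exact this

/-- The content associated with a positive functional `Λ`. -/
noncomputable def pietschContent : MeasureTheory.Content A where
  toFun K := Real.toNNReal (pietschRC Λ K)
  mono' K₁ K₂ h := Real.toNNReal_le_toNNReal (pietschRC_mono hΛ h)
  sup_disjoint' K₁ K₂ hd _ _ := by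
    show (pietschRC Λ (↑(K₁ ⊔ K₂) : Set A)).toNNReal = _
    rw [pietschRC_sup_disjoint hΛ K₁ K₂ hd,
      Real.toNNReal_add (pietschRC_nonneg hΛ _) (pietschRC_nonneg hΛ _)]
  sup_le' K₁ K₂ := by
    rw [← Real.toNNReal_add (pietschRC_nonneg hΛ _) (pietschRC_nonneg hΛ _)]
    exact Real.toNNReal_le_toNNReal (pietschRC_sup_le hΛ K₁ K₂)

variable [MeasurableSpace A] [BorelSpace A]

/-- The measure associated with a positive functional `Λ`. -/
noncomputable def pietschMeasure : Measure A :=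
  (pietschContent hΛ).measure

instance : (pietschMeasure hΛ).Regular := by
  unfold pietschMeasure; infer_instance

theorem pietschMeasure_univ : pietschMeasure hΛ univ = ENNReal.ofReal (Λ 1) := by
  rw [pietschMeasure, Content.measure_apply _ MeasurableSet.univ,
    (pietschContent hΛ).outerMeasure_of_isOpen univ isOpen_univ,
    (pietschContent hΛ).innerContent_of_isCompact isCompact_univ isOpen_univ]
  show ((Real.toNNReal (pietschRC Λ univ) : ℝ≥0) : ℝ≥0∞) = _
  rw [pietschRC_univ hΛ]
  rfl

theorem pietschMeasure_compact_le (K : TopologicalSpace.Compacts A) :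
    ENNReal.ofReal (pietschRC Λ (K : Set A)) ≤ pietschMeasure hΛ (K : Set A) := by
  rw [pietschMeasure, Content.measure_apply _ K.isCompact.isClosed.measurableSet,
    Content.outerMeasure_eq_iInf]
  refine le_iInf fun U => le_iInf fun hU => le_iInf fun hKU => ?_
  refine le_trans (le_of_eq ?_) ((pietschContent hΛ).le_innerContent K ⟨U, hU⟩ hKU)
  show _ = ((Real.toNNReal (pietschRC Λ (K : Set A)) : ℝ≥0) : ℝ≥0∞)
  rfl


theorem pietschLam_le_integral (g : C(A, ℝ)) (hg : ∀ a, 0 ≤ g a) :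
    Λ g ≤ ∫ a, g a ∂(pietschMeasure hΛ) := by
  set μ := pietschMeasure hΛ with hμ
  haveI : IsFiniteMeasure μ :=
    ⟨by rw [hμ, pietschMeasure_univ hΛ]; exact ENNReal.ofReal_lt_top⟩
  have hΛ1 : (0 : ℝ) ≤ Λ 1 := hΛ 1 fun a => by simp
  have hgint : Integrable (fun a => g a) μ :=
    g.continuous.integrable_of_hasCompactSupport (IsClosed.isCompact (isClosed_tsupport _))
  refine le_of_forall_pos_le_add fun η hη => ?_
  set δ : ℝ := η / (2 * (Λ 1 + 1)) with hδdef
  have hδ : 0 < δ := div_pos hη (by linarith)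
  set N : ℕ := ⌈‖g‖ / δ⌉₊ with hNdef
  set ε' : ℝ := η / (2 * (δ * N + 1)) with hε'def
  have hδN : (0 : ℝ) ≤ δ * N := by positivity
  have hε' : 0 < ε' := div_pos hη (by nlinarith)
  -- compact level sets
  set Ks : ℕ → TopologicalSpace.Compacts A := fun i =>
    ⟨{a | ((i : ℝ) + 1) * δ ≤ g a},
      (isClosed_le continuous_const g.continuous).isCompact⟩ with hKsdef
  have hchoice : ∀ i : ℕ, ∃ v ∈ pietschPos ((Ks i : Set A)), Λ v < pietschRC Λ (Ks i) + ε' :=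
    fun i => pietschRC_exists_lt hΛ _ hε'
  choose v hv hΛv using hchoice
  -- per-point analysis
  have hmem_iff : ∀ (a : A) (i : ℕ), a ∈ (Ks i : Set A) ↔ i < ⌊g a / δ⌋₊ := by
    intro a i
    have h0 : (0 : ℝ) ≤ g a / δ := div_nonneg (hg a) hδ.le
    constructor
    · intro ha
      have : ((i : ℝ) + 1) ≤ g a / δ := (le_div_iff₀ hδ).2 (by exact ha)
      have : ((i + 1 : ℕ) : ℝ) ≤ g a / δ := by push_cast; linarith
      exact Nat.lt_of_lt_of_le (Nat.lt_succ_self i) ((Nat.le_floor_iff h0).2 this)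
    · intro hi
      have h1 : ((i + 1 : ℕ) : ℝ) ≤ g a / δ := by
        have := Nat.floor_le h0
        have h2 : ((i + 1 : ℕ) : ℝ) ≤ (⌊g a / δ⌋₊ : ℝ) := by exact_mod_cast hi
        linarith
      have : ((i : ℝ) + 1) * δ ≤ g a := by
        rw [← le_div_iff₀ hδ]; push_cast at h1; linarith
      exact this
  have hMN : ∀ a, ⌊g a / δ⌋₊ ≤ N := by
    intro a
    have h1 : g a ≤ ‖g‖ := (le_abs_self _).trans (by
        rw [← Real.norm_eq_abs]; exact g.norm_coe_le_norm a)
    exact le_trans (Nat.floor_le_floor ((div_le_div_iff_of_pos_right hδ).2 h1)) (Nat.floor_le_ceil _)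
  -- Step A : pointwise bound
  have hpt : ∀ a, g a ≤ (δ • ((1 : C(A, ℝ)) + ∑ i ∈ Finset.range N, v i)) a := by
    intro a
    set M := ⌊g a / δ⌋₊ with hM
    have hMa : (M : ℝ) ≤ g a / δ := Nat.floor_le (div_nonneg (hg a) hδ.le)
    have hMa2 : g a / δ < M + 1 := Nat.lt_floor_add_one _
    have hsum : (M : ℝ) ≤ ∑ i ∈ Finset.range N, v i a := by
      calc (M : ℝ) = ∑ i ∈ Finset.range M, (1 : ℝ) := by simp
        _ ≤ ∑ i ∈ Finset.range M, v i a := by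
            refine Finset.sum_le_sum fun i hi => ?_
            exact (hv i).2 a ((hmem_iff a i).2 (Finset.mem_range.1 hi))
        _ ≤ ∑ i ∈ Finset.range N, v i a := by
            refine Finset.sum_le_sum_of_subset_of_nonneg
              (Finset.range_subset_range.2 (hMN a)) fun i _ _ => (hv i).1 a
    have hga : g a < ((M : ℝ) + 1) * δ := by
      rw [← div_lt_iff₀ hδ]; exact hMa2
    have : (δ • ((1 : C(A, ℝ)) + ∑ i ∈ Finset.range N, v i)) a
        = δ * (1 + ∑ i ∈ Finset.range N, v i a) := by
      simp [ContinuousMap.sum_apply]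
      ring
    rw [this]
    nlinarith
  -- Step B : apply Λ
  have hB : Λ g ≤ δ * (Λ 1 + ∑ i ∈ Finset.range N, Λ (v i)) := by
    have h1 := pietschLam_mono hΛ hpt
    rwa [_root_.map_smul, _root_.map_add, _root_.map_sum, smul_eq_mul] at h1
  -- Step C : content bound on each Λ (v i)
  have hC : ∑ i ∈ Finset.range N, Λ (v i)
      ≤ ∑ i ∈ Finset.range N, ((μ (Ks i : Set A)).toReal + ε') := by
    refine Finset.sum_le_sum fun i _ => ?_
    have h1 := pietschMeasure_compact_le hΛ (Ks i)
    have h2 : μ (Ks i : Set A) ≠ ⊤ := measure_ne_top μ _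
    have h3 := ENNReal.toReal_mono h2 h1
    rw [ENNReal.toReal_ofReal (pietschRC_nonneg hΛ _)] at h3
    have := (hΛv i).le
    linarith
  -- Step D : indicator comparison
  have hD : δ * ∑ i ∈ Finset.range N, (μ (Ks i : Set A)).toReal ≤ ∫ a, g a ∂μ := by
    have hind : ∀ i : ℕ, Integrable (Set.indicator (Ks i : Set A) fun _ => δ) μ :=
      fun i => (integrable_const δ).indicator (Ks i).isCompact.isClosed.measurableSet
    have hFle : ∀ a, (∑ i ∈ Finset.range N, Set.indicator (Ks i : Set A) (fun _ => δ) a) ≤ g a := by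
      intro a
      set M := ⌊g a / δ⌋₊ with hM
      have hMa : (M : ℝ) ≤ g a / δ := Nat.floor_le (div_nonneg (hg a) hδ.le)
      have heq : ∀ i ∈ Finset.range N,
          Set.indicator (Ks i : Set A) (fun _ => δ) a = if i < M then δ else 0 := by
        intro i _
        by_cases hmem : a ∈ (Ks i : Set A)
        · rw [Set.indicator_of_mem hmem, if_pos ((hmem_iff a i).1 hmem)]
        · rw [Set.indicator_of_notMem hmem, if_neg (fun hlt => hmem ((hmem_iff a i).2 hlt))]
      rw [Finset.sum_congr rfl heq]
      have : ∑ i ∈ Finset.range N, (if i < M then δ else 0)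
          = ∑ i ∈ Finset.range M, (if i < M then δ else 0) := by
        refine (Finset.sum_subset (Finset.range_subset_range.2 (hMN a)) ?_).symm
        intro i _ hni
        rw [if_neg (fun hlt => hni (Finset.mem_range.2 hlt))]
      rw [this]
      have : ∑ i ∈ Finset.range M, (if i < M then δ else 0) = (M : ℝ) * δ := by
        rw [Finset.sum_congr rfl (fun i hi => if_pos (Finset.mem_range.1 hi))]
        simp [mul_comm]
      rw [this, ← le_div_iff₀ hδ]
      exact hMa
    have hint : ∫ a, (∑ i ∈ Finset.range N, Set.indicator (Ks i : Set A) (fun _ => δ) a) ∂μ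
        ≤ ∫ a, g a ∂μ :=
      integral_mono (integrable_finset_sum _ fun i _ => hind i) hgint hFle
    rw [integral_finset_sum _ (fun i _ => hind i)] at hint
    have heq2 : ∀ i ∈ Finset.range N,
        ∫ a, Set.indicator (Ks i : Set A) (fun _ => δ) a ∂μ
          = (μ (Ks i : Set A)).toReal * δ := by
      intro i _
      rw [integral_indicator_const δ (Ks i).isCompact.isClosed.measurableSet]
      simp [smul_eq_mul, measureReal_def]
    rw [Finset.sum_congr rfl heq2] at hint
    calc δ * ∑ i ∈ Finset.range N, (μ (Ks i : Set A)).toReal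
        = ∑ i ∈ Finset.range N, (μ (Ks i : Set A)).toReal * δ := by
          rw [Finset.mul_sum]; exact Finset.sum_congr rfl fun i _ => mul_comm _ _
      _ ≤ ∫ a, g a ∂μ := hint
  -- arithmetic wrap-up
  have e1 : δ * (Λ 1 + 1) = η / 2 := by
    rw [hδdef]; field_simp
  have e2 : ε' * (δ * N + 1) = η / 2 := by
    rw [hε'def]; field_simp
  have hcard : ∑ i ∈ Finset.range N, ((μ (Ks i : Set A)).toReal + ε')
      = (∑ i ∈ Finset.range N, (μ (Ks i : Set A)).toReal) + N * ε' := by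
    rw [Finset.sum_add_distrib]
    simp [Finset.sum_const, nsmul_eq_mul]
  have hfin : δ * (Λ 1 + ∑ i ∈ Finset.range N, Λ (v i)) ≤ ∫ a, g a ∂μ + η := by
    have h1 : δ * (Λ 1 + ∑ i ∈ Finset.range N, Λ (v i))
        ≤ δ * Λ 1 + δ * ((∑ i ∈ Finset.range N, (μ (Ks i : Set A)).toReal) + N * ε') := by
      rw [mul_add]
      have := mul_le_mul_of_nonneg_left (le_trans hC (le_of_eq hcard)) hδ.le
      linarith
    have h2 : δ * Λ 1 ≤ η / 2 - δ := by nlinarith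
    have h3 : δ * ((N : ℝ) * ε') ≤ η / 2 - ε' := by nlinarith
    have h4 := hD
    nlinarith
  linarith [hB, hfin]

end RMKLite

section DualBallInstances

variable (𝕜 X : Type*) [RCLike 𝕜] [NormedAddCommGroup X] [NormedSpace 𝕜 X]

theorem dualBall_eq_preimage :
    dualBall 𝕜 X = WeakDual.toStrongDual ⁻¹' Metric.closedBall 0 1 := by
  ext φ
  simp [dualBall, Metric.mem_closedBall, dist_zero_right]

instance : CompactSpace (dualBall 𝕜 X) :=
  isCompact_iff_compactSpace.mp
    (by rw [dualBall_eq_preimage]; exact WeakDual.isCompact_closedBall 0 1)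

instance : Nonempty (dualBall 𝕜 X) :=
  ⟨⟨0, by simp [dualBall]⟩⟩

/-- The evaluation function `φ ↦ ‖φ x‖ ^ p` as a continuous map on the dual ball. -/
noncomputable def pietschEval (p : ℝ) (hp : 0 ≤ p) (x : X) : C(dualBall 𝕜 X, ℝ) :=
  ⟨fun φ => ‖(φ : WeakDual 𝕜 X) x‖ ^ p, by
    have h1 : Continuous fun φ : dualBall 𝕜 X => ((φ : WeakDual 𝕜 X) x) :=
      (WeakDual.eval_continuous x).comp continuous_subtype_val
    exact h1.norm.rpow_const fun φ => Or.inr hp⟩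

theorem pietschEval_apply (p : ℝ) (hp : 0 ≤ p) (x : X) (φ : dualBall 𝕜 X) :
    pietschEval 𝕜 X p hp x φ = ‖(φ : WeakDual 𝕜 X) x‖ ^ p := rfl

theorem dualBall_norm_le (x : X) (φ : dualBall 𝕜 X) :
    ‖(φ : WeakDual 𝕜 X) x‖ ≤ ‖x‖ := by
  have h1 : ‖WeakDual.toStrongDual (φ : WeakDual 𝕜 X)‖ ≤ 1 := φ.2
  calc ‖(φ : WeakDual 𝕜 X) x‖
      = ‖WeakDual.toStrongDual (φ : WeakDual 𝕜 X) x‖ := rfl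
    _ ≤ ‖WeakDual.toStrongDual (φ : WeakDual 𝕜 X)‖ * ‖x‖ :=
        ContinuousLinearMap.le_opNorm _ x
    _ ≤ 1 * ‖x‖ := mul_le_mul_of_nonneg_right h1 (norm_nonneg x)
    _ = ‖x‖ := one_mul _

end DualBallInstances


/-- The domination theorem for (`p`-summing `α`-sub)homogeneous mappings: a mapping
`f : X → Y` with `f 0 = 0` satisfies the `α`-subhomogeneous summing inequality with
exponent `p / α` if and only if it satisfies the corresponding Pietsch-type domination by
a regular Borel probability measure on the closed unit ball of the dual of `X` with the
weak-star topology. -/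
theorem subhomogeneous_domination
    {𝕜 X Y : Type*} [RCLike 𝕜]
    [NormedAddCommGroup X] [NormedSpace 𝕜 X] [CompleteSpace X]
    [NormedAddCommGroup Y] [NormedSpace 𝕜 Y] [CompleteSpace Y]
    (α : ℝ) (hα : 0 < α) (p : ℝ) (hp : 0 < p)
    (f : X → Y) (hf0 : f 0 = 0) :
    (∃ C₁ > 0, ∀ (m : ℕ) (x : Fin m → X),
        ∑ j, ‖f (x j)‖ ^ (p / α) ≤
          C₁ * ⨆ φ : dualBall 𝕜 X, ∑ j, ‖(φ : WeakDual 𝕜 X) (x j)‖ ^ p) ↔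
    (∃ C > 0, ∃ μ : Measure (dualBall 𝕜 X), μ.Regular ∧ IsProbabilityMeasure μ ∧
        ∀ x : X, ‖f x‖ ^ (1 / α) ≤
          C * (∫ φ, ‖(φ : WeakDual 𝕜 X) x‖ ^ p ∂μ) ^ (1 / p)) := by
  have hp' : p ≠ 0 := hp.ne'
  -- integrability of the evaluation maps for any finite measure on the dual ball
  have hint : ∀ (μ : Measure (dualBall 𝕜 X)), IsFiniteMeasure μ → ∀ (x : X),
      Integrable (fun φ : dualBall 𝕜 X => ‖(φ : WeakDual 𝕜 X) x‖ ^ p) μ := by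
    intro μ hfin x
    exact (pietschEval 𝕜 X p hp.le x).continuous.integrable_of_hasCompactSupport
      (IsClosed.isCompact (isClosed_tsupport _))
  have hbdd : ∀ (m : ℕ) (x : Fin m → X), BddAbove (Set.range fun φ : dualBall 𝕜 X =>
      ∑ j, ‖(φ : WeakDual 𝕜 X) (x j)‖ ^ p) := by
    intro m x
    refine ⟨∑ j, ‖x j‖ ^ p, ?_⟩
    rintro _ ⟨φ, rfl⟩
    exact Finset.sum_le_sum fun j _ =>
      Real.rpow_le_rpow (norm_nonneg _) (dualBall_norm_le 𝕜 X (x j) φ) hp.le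
  constructor
  · -- hard direction: summing inequality implies domination
    rintro ⟨C₁, hC₁, hsum⟩
    set Gm : X → C(dualBall 𝕜 X, ℝ) := fun x =>
      (‖f x‖ ^ (p / α)) • (1 : C(dualBall 𝕜 X, ℝ)) - C₁ • pietschEval 𝕜 X p hp.le x with hGm
    have hGmApply : ∀ (x : X) (φ : dualBall 𝕜 X),
        Gm x φ = ‖f x‖ ^ (p / α) - C₁ * ‖(φ : WeakDual 𝕜 X) x‖ ^ p := by
      intro x φ
      simp [hGm, pietschEval_apply]
    -- the summing hypothesis for arbitrary finite index types
    have hsum' : ∀ (ι : Type) (_ : Fintype ι) (x : ι → X),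
        ∑ i, ‖f (x i)‖ ^ (p / α) ≤
          C₁ * ⨆ φ : dualBall 𝕜 X, ∑ i, ‖(φ : WeakDual 𝕜 X) (x i)‖ ^ p := by
      intro ι hι x
      set m := Fintype.card ι with hm
      set e := Fintype.equivFin ι with he
      have h1 := hsum m (x ∘ e.symm)
      have h2 : ∑ j : Fin m, ‖f ((x ∘ e.symm) j)‖ ^ (p / α) = ∑ i, ‖f (x i)‖ ^ (p / α) :=
        (Fintype.sum_equiv e _ _ fun i => by simp).symm
      have h3 : ∀ φ : dualBall 𝕜 X,
          ∑ j : Fin m, ‖(φ : WeakDual 𝕜 X) ((x ∘ e.symm) j)‖ ^ p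
            = ∑ i, ‖(φ : WeakDual 𝕜 X) (x i)‖ ^ p :=
        fun φ => (Fintype.sum_equiv e _ _ fun i => by simp).symm
      rwa [h2, iSup_congr h3] at h1
    -- the basic claim for natural number coefficients
    have claim1 : ∀ (ι : Type) (_ : Fintype ι) (a : ι → ℕ) (x : ι → X),
        ∃ φ : dualBall 𝕜 X, ∑ i, (a i : ℝ) * Gm (x i) φ ≤ 0 := by
      intro ι hι a x
      have hsig : ∀ F : X → ℝ,
          ∑ σ : (i : ι) × Fin (a i), F (x σ.1) = ∑ i, (a i : ℝ) * F (x i) := by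
        intro F
        rw [← Finset.univ_sigma_univ, Finset.sum_sigma]
        refine Finset.sum_congr rfl fun i _ => ?_
        simp [Finset.sum_const, nsmul_eq_mul]
      have h1 := hsum' ((i : ι) × Fin (a i)) inferInstance (fun σ => x σ.1)
      set ψ : C(dualBall 𝕜 X, ℝ) := ∑ i, (a i : ℝ) • pietschEval 𝕜 X p hp.le (x i) with hψ
      have hψapp : ∀ φ, ψ φ = ∑ i, (a i : ℝ) * ‖(φ : WeakDual 𝕜 X) (x i)‖ ^ p := by
        intro φ
        simp [hψ, ContinuousMap.sum_apply, pietschEval_apply]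
      obtain ⟨φ₀, -, hφ₀⟩ := isCompact_univ.exists_isMaxOn Set.univ_nonempty
        (ψ.continuous.continuousOn)
      have hmax : ∀ φ, ψ φ ≤ ψ φ₀ := fun φ => hφ₀ (Set.mem_univ φ)
      have h4 : ∀ φ : dualBall 𝕜 X,
          ∑ σ : (i : ι) × Fin (a i), ‖(φ : WeakDual 𝕜 X) (x σ.1)‖ ^ p = ψ φ := by
        intro φ
        rw [hψapp]
        exact hsig fun z => ‖(φ : WeakDual 𝕜 X) z‖ ^ p
      rw [iSup_congr h4] at h1
      have h5 : (⨆ φ : dualBall 𝕜 X, ψ φ) ≤ ψ φ₀ := ciSup_le hmax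
      have h6 : ∑ σ : (i : ι) × Fin (a i), ‖f (x σ.1)‖ ^ (p / α)
          = ∑ i, (a i : ℝ) * ‖f (x i)‖ ^ (p / α) := hsig fun z => ‖f z‖ ^ (p / α)
      refine ⟨φ₀, ?_⟩
      have h7 : ∑ i, (a i : ℝ) * Gm (x i) φ₀
          = ∑ i, (a i : ℝ) * ‖f (x i)‖ ^ (p / α)
            - ∑ i, (a i : ℝ) * (C₁ * ‖(φ₀ : WeakDual 𝕜 X) (x i)‖ ^ p) := by
        rw [← Finset.sum_sub_distrib]
        refine Finset.sum_congr rfl fun i _ => ?_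
        rw [hGmApply]
        ring
      have h8 : C₁ * ψ φ₀ = ∑ i, (a i : ℝ) * (C₁ * ‖(φ₀ : WeakDual 𝕜 X) (x i)‖ ^ p) := by
        rw [hψapp, Finset.mul_sum]
        exact Finset.sum_congr rfl fun i _ => by ring
      have h9 : ∑ i, (a i : ℝ) * ‖f (x i)‖ ^ (p / α) ≤ C₁ * ψ φ₀ := by
        calc ∑ i, (a i : ℝ) * ‖f (x i)‖ ^ (p / α)
            = ∑ σ : (i : ι) × Fin (a i), ‖f (x σ.1)‖ ^ (p / α) := h6.symm
          _ ≤ C₁ * ⨆ φ : dualBall 𝕜 X, ψ φ := h1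
          _ ≤ C₁ * ψ φ₀ := mul_le_mul_of_nonneg_left h5 hC₁.le
      rw [h7, ← h8]
      linarith
    -- the claim for arbitrary nonnegative real coefficients
    have claim2 : ∀ (ι : Type) (_ : Fintype ι) (t : ι → ℝ), (∀ i, 0 ≤ t i) →
        ∀ (x : ι → X) (ε : ℝ), 0 < ε → ∃ φ : dualBall 𝕜 X, ∑ i, t i * Gm (x i) φ < ε := by
      intro ι hι t ht x ε hε
      set R := ∑ i, ‖Gm (x i)‖ with hR
      have hR0 : 0 ≤ R := Finset.sum_nonneg fun i _ => norm_nonneg _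
      set k : ℕ := ⌊R / ε⌋₊ + 1 with hk
      have hk0 : (0 : ℝ) < k := by positivity
      have hkR : R / ε < k := by
        rw [hk]
        push_cast
        exact Nat.lt_floor_add_one _
      have hRk : R < k * ε := by rwa [div_lt_iff₀ hε] at hkR
      obtain ⟨φ₀, hφ₀⟩ := claim1 ι inferInstance (fun i => ⌈(k : ℝ) * t i⌉₊) x
      refine ⟨φ₀, ?_⟩
      have key : (k : ℝ) * ∑ i, t i * Gm (x i) φ₀ ≤ R := by
        have h1 : ∀ i : ι, (k : ℝ) * (t i * Gm (x i) φ₀)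
            ≤ (⌈(k : ℝ) * t i⌉₊ : ℝ) * Gm (x i) φ₀ + ‖Gm (x i)‖ := by
          intro i
          set a : ℝ := (⌈(k : ℝ) * t i⌉₊ : ℝ) with ha
          set gv : ℝ := Gm (x i) φ₀ with hgv
          have ha1 : (k : ℝ) * t i ≤ a := Nat.le_ceil _
          have ha2 : a < (k : ℝ) * t i + 1 :=
            Nat.ceil_lt_add_one (mul_nonneg hk0.le (ht i))
          have hb : |gv| ≤ ‖Gm (x i)‖ := by
            rw [← Real.norm_eq_abs]
            exact (Gm (x i)).norm_coe_le_norm φ₀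
          have h2 : ((k : ℝ) * t i - a) * gv ≤ ‖Gm (x i)‖ := by
            have habs : |((k : ℝ) * t i - a) * gv| ≤ 1 * ‖Gm (x i)‖ := by
              rw [abs_mul]
              refine mul_le_mul ?_ hb (abs_nonneg _) zero_le_one
              rw [abs_le]
              constructor <;> linarith
            calc ((k : ℝ) * t i - a) * gv ≤ |((k : ℝ) * t i - a) * gv| := le_abs_self _
              _ ≤ 1 * ‖Gm (x i)‖ := habs
              _ = ‖Gm (x i)‖ := one_mul _
          have h3 : (k : ℝ) * (t i * gv) - a * gv = ((k : ℝ) * t i - a) * gv := by ring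
          linarith
        calc (k : ℝ) * ∑ i, t i * Gm (x i) φ₀
            = ∑ i, (k : ℝ) * (t i * Gm (x i) φ₀) := Finset.mul_sum _ _ _
          _ ≤ ∑ i, ((⌈(k : ℝ) * t i⌉₊ : ℝ) * Gm (x i) φ₀ + ‖Gm (x i)‖) :=
              Finset.sum_le_sum fun i _ => h1 i
          _ = (∑ i, (⌈(k : ℝ) * t i⌉₊ : ℝ) * Gm (x i) φ₀) + R := Finset.sum_add_distrib
          _ ≤ R := by linarith [hφ₀]
      have h4 : ∑ i, t i * Gm (x i) φ₀ ≤ R / k := by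
        rw [le_div_iff₀ hk0]
        linarith [key]
      calc ∑ i, t i * Gm (x i) φ₀ ≤ R / k := h4
        _ < ε := by
            rw [div_lt_iff₀ hk0]
            linarith [hRk]
    -- the positive open convex cone
    set P : Set C(dualBall 𝕜 X, ℝ) := {h | ∀ φ, 0 < h φ} with hPdef
    have hPopen : IsOpen P := by
      rw [Metric.isOpen_iff]
      intro h hh
      obtain ⟨φm, -, hφm⟩ := isCompact_univ.exists_isMinOn Set.univ_nonempty
        (h.continuous.continuousOn)
      refine ⟨h φm, hh φm, fun g hg => ?_⟩
      intro φ
      have h1 : |g φ - h φ| ≤ dist g h := by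
        rw [← Real.dist_eq]
        exact ContinuousMap.dist_apply_le_dist φ
      have h2 : dist g h < h φm := Metric.mem_ball.1 hg
      have h3 : h φm ≤ h φ := hφm (Set.mem_univ φ)
      have h4 := (abs_le.1 h1).1
      linarith
    have hPconv : Convex ℝ P := by
      intro g1 hg1 g2 hg2 a b ha hb hab
      intro φ
      have e : (a • g1 + b • g2) φ = a * g1 φ + b * g2 φ := by simp
      rw [e]
      have hm : 0 < min (g1 φ) (g2 φ) := lt_min (hg1 φ) (hg2 φ)
      have h1 := mul_le_mul_of_nonneg_left (min_le_left (g1 φ) (g2 φ)) ha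
      have h2 := mul_le_mul_of_nonneg_left (min_le_right (g1 φ) (g2 φ)) hb
      nlinarith
    have hmemP1 : (1 : C(dualBall 𝕜 X, ℝ)) ∈ P := fun φ => by
      simp
    have hdisj : Disjoint P (convexHull ℝ (Set.range Gm)) := by
      rw [Set.disjoint_left]
      intro h hhP hhT
      obtain ⟨ι, hι, w, z, hw0, hw1, hz, hzsum⟩ := mem_convexHull_iff_exists_fintype.1 hhT
      choose xz hxz using fun i => Set.mem_range.1 (hz i)
      obtain ⟨φm, -, hφm⟩ := isCompact_univ.exists_isMinOn Set.univ_nonempty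
        (h.continuous.continuousOn)
      have hδ : 0 < h φm := hhP φm
      obtain ⟨φ, hφ⟩ := claim2 ι inferInstance w hw0 xz (h φm) hδ
      have heq : h φ = ∑ i, w i * Gm (xz i) φ := by
        rw [← hzsum]
        simp [ContinuousMap.sum_apply, hxz]
      have h2 : h φm ≤ h φ := hφm (Set.mem_univ φ)
      rw [heq] at h2
      linarith
    obtain ⟨L, u, hLP, hLT⟩ := geometric_hahn_banach_open hPconv hPopen
      (convex_convexHull ℝ _) hdisj
    -- basic facts about L and u
    have hu0 : 0 ≤ u := by
      have hlim : Filter.Tendsto (fun t : ℝ => t * L 1)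
          (nhdsWithin 0 (Set.Ioi 0)) (nhds 0) := by
        have h0 : Filter.Tendsto (fun t : ℝ => t * L 1) (nhds 0) (nhds (0 * L 1)) :=
          (continuous_id.mul continuous_const).tendsto (0 : ℝ)
        rw [zero_mul] at h0
        exact h0.mono_left nhdsWithin_le_nhds
      refine le_of_tendsto hlim (Filter.eventually_of_mem self_mem_nhdsWithin fun t ht => ?_)
      have hmem : t • (1 : C(dualBall 𝕜 X, ℝ)) ∈ P := fun φ => by
        simp only [ContinuousMap.smul_apply, ContinuousMap.one_apply, smul_eq_mul, mul_one]
        exact ht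
      have := hLP _ hmem
      rw [_root_.map_smul, smul_eq_mul] at this
      exact this.le
    have hLP' : ∀ h ∈ P, L h ≤ 0 := by
      intro h hh
      by_contra hpos
      push_neg at hpos
      have ht : 0 < (u + 1) / L h := div_pos (by linarith) hpos
      have hmem : ((u + 1) / L h) • h ∈ P := fun φ => by
        simp only [ContinuousMap.smul_apply, smul_eq_mul]
        exact mul_pos ht (hh φ)
      have h2 := hLP _ hmem
      rw [_root_.map_smul, smul_eq_mul, div_mul_cancel₀ _ hpos.ne'] at h2
      linarith
    set Λ : C(dualBall 𝕜 X, ℝ) →L[ℝ] ℝ := -L with hΛdef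
    have hΛapply : ∀ g, Λ g = -(L g) := fun g => rfl
    have hΛpos : ∀ g : C(dualBall 𝕜 X, ℝ), (∀ φ, 0 ≤ g φ) → 0 ≤ Λ g := by
      intro g hg
      have hL1 : L 1 ≤ 0 := hLP' 1 hmemP1
      have key : ∀ ε : ℝ, 0 < ε → L g ≤ ε * (-(L 1)) := by
        intro ε hε
        have hmem : g + ε • (1 : C(dualBall 𝕜 X, ℝ)) ∈ P := fun φ => by
          simp only [ContinuousMap.add_apply, ContinuousMap.smul_apply,
            ContinuousMap.one_apply, smul_eq_mul, mul_one]
          have := hg φ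
          linarith
        have h2 := hLP' _ hmem
        rw [_root_.map_add, _root_.map_smul, smul_eq_mul] at h2
        linarith
      rw [hΛapply, neg_nonneg]
      by_contra hneg
      push_neg at hneg
      set ε := L g / (2 * (-(L 1)) + 1) with hε
      have hden : (0 : ℝ) < 2 * (-(L 1)) + 1 := by linarith
      have hεpos : 0 < ε := div_pos hneg hden
      have h3 := key ε hεpos
      have h4 : ε * (-(L 1)) ≤ L g / 2 := by
        rw [hε, div_mul_eq_mul_div, div_le_div_iff₀ hden two_pos]
        nlinarith
      linarith
    have hΛ1pos : 0 < Λ 1 := by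
      rcases eq_or_lt_of_le (hΛpos 1 fun φ => by simp) with h0 | h0
      · exfalso
        have hzero : ∀ g : C(dualBall 𝕜 X, ℝ), Λ g = 0 := by
          intro g
          have ha : 0 ≤ Λ ((‖g‖ : ℝ) • 1 - g) := by
            refine hΛpos _ fun φ => ?_
            have h1 := g.norm_coe_le_norm φ
            rw [Real.norm_eq_abs] at h1
            have h2 := (abs_le.1 h1).2
            simp only [ContinuousMap.sub_apply, ContinuousMap.smul_apply,
              ContinuousMap.one_apply, smul_eq_mul, mul_one]
            linarith
          have hb : 0 ≤ Λ ((‖g‖ : ℝ) • 1 + g) := by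
            refine hΛpos _ fun φ => ?_
            have h1 := g.norm_coe_le_norm φ
            rw [Real.norm_eq_abs] at h1
            have h2 := (abs_le.1 h1).1
            simp only [ContinuousMap.add_apply, ContinuousMap.smul_apply,
              ContinuousMap.one_apply, smul_eq_mul, mul_one]
            linarith
          rw [map_sub, _root_.map_smul, smul_eq_mul, ← h0, mul_zero, zero_sub, neg_nonneg] at ha
          rw [_root_.map_add, _root_.map_smul, smul_eq_mul, ← h0, mul_zero, zero_add] at hb
          linarith
        have h1 : L (Gm 0) = 0 := by
          have := hzero (Gm 0)
          rw [hΛapply] at this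
          linarith
        have h2 := hLT (Gm 0) (subset_convexHull ℝ _ (Set.mem_range_self 0))
        have h4 : L 1 = 0 := by
          have := hzero 1
          rw [hΛapply] at this
          linarith
        have h3 := hLP 1 hmemP1
        rw [h4] at h3
        rw [h1] at h2
        linarith
      · exact h0
    have hΛG : ∀ x : X, Λ (Gm x) ≤ 0 := by
      intro x
      have h1 := hLT (Gm x) (subset_convexHull ℝ _ (Set.mem_range_self x))
      have h2 : 0 ≤ L (Gm x) := le_trans hu0 h1
      rw [hΛapply]
      linarith
    -- the Pietsch measure
    set μ' := pietschMeasure hΛpos with hμ'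
    have hμ'univ : μ' Set.univ = ENNReal.ofReal (Λ 1) := pietschMeasure_univ hΛpos
    haveI : IsFiniteMeasure μ' := ⟨by rw [hμ'univ]; exact ENNReal.ofReal_lt_top⟩
    set c : ℝ≥0∞ := ENNReal.ofReal (Λ 1) with hc
    have hc0 : c ≠ 0 := by
      rw [hc]
      exact (ENNReal.ofReal_pos.2 hΛ1pos).ne'
    have hctop : c ≠ ⊤ := ENNReal.ofReal_ne_top
    set μ : Measure (dualBall 𝕜 X) := c⁻¹ • μ' with hμdef
    haveI hreg' : μ'.Regular := by rw [hμ']; unfold pietschMeasure; infer_instance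
    have hregμ : μ.Regular := Measure.Regular.smul (ENNReal.inv_ne_top.2 hc0)
    have hprobμ : IsProbabilityMeasure μ := by
      constructor
      rw [hμdef, Measure.smul_apply, hμ'univ, smul_eq_mul, ENNReal.inv_mul_cancel hc0 hctop]
    refine ⟨C₁ ^ (1 / p), Real.rpow_pos_of_pos hC₁ _, μ, hregμ, hprobμ, ?_⟩
    intro x
    have hΛsplit : Λ (Gm x) = ‖f x‖ ^ (p / α) * Λ 1 - C₁ * Λ (pietschEval 𝕜 X p hp.le x) := by
      have : Gm x = (‖f x‖ ^ (p / α)) • (1 : C(dualBall 𝕜 X, ℝ))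
          - C₁ • pietschEval 𝕜 X p hp.le x := rfl
      rw [this, map_sub, _root_.map_smul, _root_.map_smul, smul_eq_mul, smul_eq_mul]
    have h1 : ‖f x‖ ^ (p / α) * Λ 1 ≤ C₁ * Λ (pietschEval 𝕜 X p hp.le x) := by
      have := hΛG x
      rw [hΛsplit] at this
      linarith
    have h2 : Λ (pietschEval 𝕜 X p hp.le x) ≤ ∫ φ, pietschEval 𝕜 X p hp.le x φ ∂μ' :=
      pietschLam_le_integral hΛpos _ fun φ => Real.rpow_nonneg (norm_nonneg _) p
    have h3 : ∫ φ, pietschEval 𝕜 X p hp.le x φ ∂μ'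
        = Λ 1 * ∫ φ, ‖(φ : WeakDual 𝕜 X) x‖ ^ p ∂μ := by
      simp only [pietschEval_apply]
      rw [hμdef, integral_smul_measure, ENNReal.toReal_inv, hc,
        ENNReal.toReal_ofReal hΛ1pos.le, smul_eq_mul, ← mul_assoc,
        mul_inv_cancel₀ hΛ1pos.ne', one_mul]
    have h4 : ‖f x‖ ^ (p / α) ≤ C₁ * ∫ φ, ‖(φ : WeakDual 𝕜 X) x‖ ^ p ∂μ := by
      have h5 := le_trans h1 (mul_le_mul_of_nonneg_left h2 hC₁.le)
      rw [h3] at h5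
      have h6 : C₁ * (Λ 1 * ∫ φ, ‖(φ : WeakDual 𝕜 X) x‖ ^ p ∂μ)
          = (C₁ * ∫ φ, ‖(φ : WeakDual 𝕜 X) x‖ ^ p ∂μ) * Λ 1 := by ring
      rw [h6] at h5
      exact le_of_mul_le_mul_right h5 hΛ1pos
    have hI0 : 0 ≤ ∫ φ, ‖(φ : WeakDual 𝕜 X) x‖ ^ p ∂μ :=
      integral_nonneg fun φ => Real.rpow_nonneg (norm_nonneg _) _
    have e1 : (‖f x‖ ^ (p / α)) ^ (1 / p) = ‖f x‖ ^ (1 / α) := by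
      rw [← Real.rpow_mul (norm_nonneg _)]
      congr 1
      field_simp
      try ring
    have e2 : (C₁ * ∫ φ, ‖(φ : WeakDual 𝕜 X) x‖ ^ p ∂μ) ^ (1 / p)
        = C₁ ^ (1 / p) * (∫ φ, ‖(φ : WeakDual 𝕜 X) x‖ ^ p ∂μ) ^ (1 / p) :=
      Real.mul_rpow hC₁.le hI0
    calc ‖f x‖ ^ (1 / α) = (‖f x‖ ^ (p / α)) ^ (1 / p) := e1.symm
      _ ≤ (C₁ * ∫ φ, ‖(φ : WeakDual 𝕜 X) x‖ ^ p ∂μ) ^ (1 / p) :=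
          Real.rpow_le_rpow (Real.rpow_nonneg (norm_nonneg _) _) h4 (by positivity)
      _ = _ := e2
  · -- easy direction: domination implies summing inequality
    rintro ⟨C, hC, μ, hreg, hprob, hdom⟩
    haveI := hprob
    refine ⟨C ^ p, Real.rpow_pos_of_pos hC p, fun m x => ?_⟩
    set S := ⨆ φ : dualBall 𝕜 X, ∑ j, ‖(φ : WeakDual 𝕜 X) (x j)‖ ^ p with hS
    have key : ∀ j : Fin m, ‖f (x j)‖ ^ (p / α)
        ≤ C ^ p * ∫ φ, ‖(φ : WeakDual 𝕜 X) (x j)‖ ^ p ∂μ := by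
      intro j
      have h0 : (0 : ℝ) ≤ ∫ φ, ‖(φ : WeakDual 𝕜 X) (x j)‖ ^ p ∂μ :=
        integral_nonneg fun φ => Real.rpow_nonneg (norm_nonneg _) p
      have h1 := hdom (x j)
      have e1 : (‖f (x j)‖ ^ (1 / α)) ^ p = ‖f (x j)‖ ^ (p / α) := by
        rw [← Real.rpow_mul (norm_nonneg _)]
        congr 1
        field_simp
        try ring
      have e2 : (C * (∫ φ, ‖(φ : WeakDual 𝕜 X) (x j)‖ ^ p ∂μ) ^ (1 / p)) ^ p
          = C ^ p * ∫ φ, ‖(φ : WeakDual 𝕜 X) (x j)‖ ^ p ∂μ := by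
        rw [Real.mul_rpow hC.le (Real.rpow_nonneg h0 _), ← Real.rpow_mul h0,
          one_div, inv_mul_cancel₀ hp', Real.rpow_one]
      calc ‖f (x j)‖ ^ (p / α) = (‖f (x j)‖ ^ (1 / α)) ^ p := e1.symm
        _ ≤ (C * (∫ φ, ‖(φ : WeakDual 𝕜 X) (x j)‖ ^ p ∂μ) ^ (1 / p)) ^ p :=
            Real.rpow_le_rpow (Real.rpow_nonneg (norm_nonneg _) _) h1 hp.le
        _ = _ := e2
    have hSle : ∫ φ, (∑ j, ‖(φ : WeakDual 𝕜 X) (x j)‖ ^ p) ∂μ ≤ S := by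
      have h2 : ∫ φ, (∑ j, ‖(φ : WeakDual 𝕜 X) (x j)‖ ^ p) ∂μ ≤ ∫ _φ, S ∂μ := by
        refine integral_mono (integrable_finset_sum _ fun j _ =>
          hint μ inferInstance (x j)) (integrable_const S) fun φ => ?_
        exact le_ciSup (hbdd m x) φ
      rwa [integral_const, probReal_univ, one_smul] at h2
    calc ∑ j, ‖f (x j)‖ ^ (p / α)
        ≤ ∑ j, C ^ p * ∫ φ, ‖(φ : WeakDual 𝕜 X) (x j)‖ ^ p ∂μ :=
          Finset.sum_le_sum fun j _ => key j
      _ = C ^ p * ∑ j, ∫ φ, ‖(φ : WeakDual 𝕜 X) (x j)‖ ^ p ∂μ := by rw [Finset.mul_sum]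
      _ = C ^ p * ∫ φ, (∑ j, ‖(φ : WeakDual 𝕜 X) (x j)‖ ^ p) ∂μ := by
          rw [integral_finset_sum _ fun j _ => hint μ inferInstance (x j)]
      _ ≤ C ^ p * S :=
          mul_le_mul_of_nonneg_left hSle (Real.rpow_pos_of_pos hC p).le
end
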